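/- arXiv:2404.09236 — 2 statements merged into one kernel-verified Lean document; each statement's English description precedes it below -/
import Mathlib

section
/- In the cycle convexity on the join G = G1 ∨ G2 where |V(G1)|, |V(G2)| ≥ 2, for any vertex v ∈ V(G1) and any two vertices u, w ∈ V(G2), the convex hull of {v, u, w} is all of V(G). -/
open SimpleGraph Set

variable {V : Type*}

/-- The interval function of the cycle convexity: `S` together with all vertices `u` such that
the subgraph induced by `S ∪ {u}` has a cycle containing `u`. -/
def cycInt (G : SimpleGraph V) (S : Set V) : Set V :=
  S ∪ {u | ∃ w : G.Walk u u, w.IsCycle ∧ ∀ x ∈ w.support, x ∈ S ∪ {u}}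

/-- The convex hull in the cycle convexity, obtained by iterating `cycInt`. -/
def cycHull (G : SimpleGraph V) (S : Set V) : Set V :=
  ⋃ k, (cycInt G)^[k] S

/-- A set is convex in the cycle convexity iff it is a fixed point of the interval function. -/
def CycConvex (G : SimpleGraph V) (S : Set V) : Prop := cycInt G S = S

/-- A hull set: a set whose convex hull is the whole vertex set. -/
def IsHullSet (G : SimpleGraph V) (S : Set V) : Prop := cycHull G S = Set.univ

/-- The convexity number: the largest cardinality of a convex set different from `V(G)`. -/
noncomputable def conNum (G : SimpleGraph V) : ℕ :=
  sSup {n | ∃ S : Set V, CycConvex G S ∧ S ≠ Set.univ ∧ S.ncard = n}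

/-- The percolation time: the largest `k > 0` such that some hull set `S` satisfies
`I^[k-1] S ≠ V(G)`; `0` if no such `k` exists. -/
noncomputable def percTime (G : SimpleGraph V) : ℕ :=
  sSup {k | 0 < k ∧ ∃ S : Set V, IsHullSet G S ∧ (cycInt G)^[k-1] S ≠ Set.univ}

/-- A set is convexly independent if no element lies in the hull of the others. -/
def ConvIndep (G : SimpleGraph V) (S : Set V) : Prop :=
  ∀ v ∈ S, v ∉ cycHull G (S \ {v})

/-- The independence number (as a supremum of cardinalities of independent sets). -/
noncomputable def alphaNum (G : SimpleGraph V) : ℕ :=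
  sSup {n | ∃ S : Set V, S.Pairwise (fun a b => ¬ G.Adj a b) ∧ S.ncard = n}

/-- The join of two graphs: their disjoint union together with all edges between the parts. -/
def joinGraph {V1 V2 : Type*} (G1 : SimpleGraph V1) (G2 : SimpleGraph V2) :
    SimpleGraph (V1 ⊕ V2) where
  Adj x y :=
    (∃ a b, x = Sum.inl a ∧ y = Sum.inl b ∧ G1.Adj a b) ∨
    (∃ a b, x = Sum.inr a ∧ y = Sum.inr b ∧ G2.Adj a b) ∨
    (∃ a b, x = Sum.inl a ∧ y = Sum.inr b) ∨
    (∃ a b, x = Sum.inr a ∧ y = Sum.inl b)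
  symm := by
    constructor
    rintro x y (⟨a,b,rfl,rfl,h⟩|⟨a,b,rfl,rfl,h⟩|⟨a,b,rfl,rfl⟩|⟨a,b,rfl,rfl⟩)
    · exact Or.inl ⟨b, a, rfl, rfl, h.symm⟩
    · exact Or.inr (Or.inl ⟨b, a, rfl, rfl, h.symm⟩)
    · exact Or.inr (Or.inr (Or.inr ⟨b, a, rfl, rfl⟩))
    · exact Or.inr (Or.inr (Or.inl ⟨b, a, rfl, rfl⟩))
  loopless := by
    constructor
    rintro x (⟨a,b,rfl,h,hadj⟩|⟨a,b,rfl,h,hadj⟩|⟨a,b,rfl,h⟩|⟨a,b,rfl,h⟩) <;>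
      simp_all

/-! Each vertex `a` of `V₁` closes the 4-cycle `a, u, v, w`, so `I(S) ⊇ V₁`. Then, for any
`v' ≠ v` in `V₁`, each vertex `b` of `V₂` closes the 4-cycle `b, v, u, v'` inside `I(S)`, so
`I(I(S))` is the whole vertex set. -/

lemma subset_cycInt (G : SimpleGraph V) (S : Set V) : S ⊆ cycInt G S :=
  subset_union_left

lemma iterate_cycInt_subset_cycHull (G : SimpleGraph V) (S : Set V) (k : ℕ) :
    (cycInt G)^[k] S ⊆ cycHull G S :=
  subset_iUnion (fun k => (cycInt G)^[k] S) k

lemma mem_cycInt_of_fourCycle {G : SimpleGraph V} {S : Set V} {a b c d : V}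
    (hab : G.Adj a b) (hbc : G.Adj b c) (hcd : G.Adj c d) (hda : G.Adj d a)
    (hac : a ≠ c) (hbd : b ≠ d) (hb : b ∈ S) (hc : c ∈ S) (hd : d ∈ S) :
    a ∈ cycInt G S := by
  refine Or.inr ⟨.cons hab (.cons hbc (.cons hcd (.cons hda .nil))), ?_, ?_⟩
  · simp [Walk.isCycle_def, Walk.isTrail_def, Sym2.eq, Sym2.rel_iff', hab.ne, hbc.ne, hcd.ne,
      hda.ne, hac, hbd, hab.ne.symm, hda.ne.symm, hac.symm]
  · simp [hb, hc, hd]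

section Join

variable {V1 V2 : Type*} {G1 : SimpleGraph V1} {G2 : SimpleGraph V2} {S : Set (V1 ⊕ V2)}

lemma joinGraph_adj_inl_inr (a : V1) (b : V2) : (joinGraph G1 G2).Adj (.inl a) (.inr b) :=
  .inr (.inr (.inl ⟨a, b, rfl, rfl⟩))

lemma joinGraph_adj_inr_inl (b : V2) (a : V1) : (joinGraph G1 G2).Adj (.inr b) (.inl a) :=
  (joinGraph_adj_inl_inr a b).symm

lemma joinGraph_inl_mem_cycInt {a' : V1} {b b' : V2} (hbb' : b ≠ b') (ha' : .inl a' ∈ S)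
    (hb : .inr b ∈ S) (hb' : .inr b' ∈ S) (a : V1) : .inl a ∈ cycInt (joinGraph G1 G2) S := by
  by_cases haa' : a = a'
  · exact subset_cycInt _ _ (haa' ▸ ha')
  · exact mem_cycInt_of_fourCycle (joinGraph_adj_inl_inr a b) (joinGraph_adj_inr_inl b a')
      (joinGraph_adj_inl_inr a' b') (joinGraph_adj_inr_inl b' a) (by simpa) (by simpa) hb ha' hb'

lemma joinGraph_inr_mem_cycInt {a a' : V1} {b' : V2} (haa' : a ≠ a') (hb' : .inr b' ∈ S)
    (ha : .inl a ∈ S) (ha' : .inl a' ∈ S) (b : V2) : .inr b ∈ cycInt (joinGraph G1 G2) S := by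
  by_cases hbb' : b = b'
  · exact subset_cycInt _ _ (hbb' ▸ hb')
  · exact mem_cycInt_of_fourCycle (joinGraph_adj_inr_inl b a) (joinGraph_adj_inl_inr a b')
      (joinGraph_adj_inr_inl b' a') (joinGraph_adj_inl_inr a' b) (by simpa) (by simpa) ha hb' ha'

end Join

theorem stmt_8_general {V1 V2 : Type*} [Fintype V1]
    (G1 : SimpleGraph V1) (G2 : SimpleGraph V2)
    (h1 : 2 ≤ Fintype.card V1)
    (v : V1) (u w : V2) (huw : u ≠ w) :
    cycHull (joinGraph G1 G2) {Sum.inl v, Sum.inr u, Sum.inr w} = Set.univ := by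
  set S : Set (V1 ⊕ V2) := {.inl v, .inr u, .inr w}
  obtain ⟨v', hv'⟩ := Fintype.exists_ne_of_one_lt_card h1 v
  have hinl (a : V1) : .inl a ∈ cycInt (joinGraph G1 G2) S :=
    joinGraph_inl_mem_cycInt (a' := v) huw (by simp [S]) (by simp [S]) (by simp [S]) a
  have hinr (b : V2) : .inr b ∈ (cycInt (joinGraph G1 G2))^[2] S :=
    joinGraph_inr_mem_cycInt (b' := u) hv'.symm (subset_cycInt _ _ (by simp [S])) (hinl v)
      (hinl v') b
  refine eq_univ_of_forall fun x => iterate_cycInt_subset_cycHull _ S 2 ?_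
  rcases x with a | b
  · exact subset_cycInt _ _ (hinl a)
  · exact hinr b

theorem stmt_8 {V1 V2 : Type*} [Fintype V1] [Fintype V2]
    (G1 : SimpleGraph V1) (G2 : SimpleGraph V2)
    (h1 : 2 ≤ Fintype.card V1) (h2 : 2 ≤ Fintype.card V2)
    (v : V1) (u w : V2) (huw : u ≠ w) :
    cycHull (joinGraph G1 G2) {Sum.inl v, Sum.inr u, Sum.inr w} = Set.univ :=
  stmt_8_general G1 G2 h1 v u w huw
end

section
/- Let G be a graph whose vertex set is the disjoint union of vertex sets of its connected components C_1, ..., C_t. Then in the cycle convexity, con(G) = max over i of (|V(G)| − |V(C_i)| + con(C_i)), provided t ≥ 2. -/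
open SimpleGraph Set

variable {V : Type*}

/-! A cycle through a vertex stays inside its connected component, so the cycle convexity of `G`
splits over the components: a proper convex set misses some vertex `u`, and its trace on the
component of `u` is a proper convex set there; conversely, a proper convex set of one component
together with all the other components is a proper convex set of `G`. -/

namespace SimpleGraph

variable {G : SimpleGraph V}

lemma Walk.mem_supp_connectedComponentMk {u v x : V} (w : G.Walk u v) (hx : x ∈ w.support) :
    x ∈ (G.connectedComponentMk u).supp := by
  classical
  exact ConnectedComponent.mem_supp_iff _ _ |>.2 <|
    ConnectedComponent.sound (w.takeUntil x hx).reachable.symm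

end SimpleGraph

section CycleConvexity

variable {W : Type*} {G : SimpleGraph V}

lemma cycConvex_iff {S : Set V} : CycConvex G S ↔
    ∀ u (w : G.Walk u u), w.IsCycle → (∀ x ∈ w.support, x ∈ S ∪ {u}) → u ∈ S := by
  refine ⟨fun h u w hw hS => h ▸ Or.inr ⟨w, hw, hS⟩, fun h => ?_⟩
  exact Subset.antisymm (union_subset Subset.rfl fun u ⟨w, hw, hS⟩ => h u w hw hS)
    subset_union_left

lemma cycConvex_empty : CycConvex G (∅ : Set V) := by
  refine cycConvex_iff.2 fun u w hw hS => ?_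
  cases w with
  | nil => exact absurd rfl hw.ne_nil
  | cons h p =>
    have hb := hS _ (List.mem_cons_of_mem _ p.start_mem_support)
    simp only [empty_union, mem_singleton_iff] at hb
    exact absurd hb.symm h.ne

lemma CycConvex.comap {G' : SimpleGraph W} {S : Set V} (hS : CycConvex G S) (f : G' →g G)
    (hf : Function.Injective f) : CycConvex G' (f ⁻¹' S) := by
  refine cycConvex_iff.2 fun u w hw hS' => cycConvex_iff.1 hS (f u) (w.map f) (hw.map hf) ?_
  intro x hx
  rw [Walk.support_map, List.mem_map] at hx
  obtain ⟨x, hx, rfl⟩ := hx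
  exact (hS' x hx).imp id (congrArg f)

lemma CycConvex.compl_supp_union_image (K : G.ConnectedComponent) {T : Set K.supp}
    (hT : CycConvex (G.induce K.supp) T) : CycConvex G (K.suppᶜ ∪ Subtype.val '' T) := by
  refine cycConvex_iff.2 fun u w hw hS => ?_
  by_cases hu : u ∈ K.supp
  swap
  · exact Or.inl hu
  have hK : G.connectedComponentMk u = K := (ConnectedComponent.mem_supp_iff _ _).1 hu
  have hw_supp : ∀ x ∈ w.support, x ∈ K.supp := hK ▸ fun x => w.mem_supp_connectedComponentMk
  have hw' : (w.induce K.supp hw_supp).IsCycle := by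
    rw [← Walk.map_induce w hw_supp] at hw
    exact (Walk.isCycle_map_iff_of_injective Subtype.val_injective).1 hw
  refine Or.inr ⟨_, cycConvex_iff.1 hT _ _ hw' fun x hx => ?_, rfl⟩
  rw [Walk.support_induce, List.mem_attachWith] at hx
  rcases hS x hx with (hxK | ⟨y, hy, hyx⟩) | rfl
  · exact absurd x.2 hxK
  · exact Or.inl (Subtype.val_injective hyx ▸ hy)
  · exact Or.inr rfl

lemma bddAbove_ncard_cycConvex [Finite V] :
    BddAbove {n | ∃ S : Set V, CycConvex G S ∧ S ≠ univ ∧ S.ncard = n} :=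
  ⟨Nat.card V, fun _ ⟨S, _, _, hS⟩ => hS ▸ S.ncard_le_card⟩

lemma ncard_le_conNum [Finite V] {S : Set V} (hS : CycConvex G S) (hS_ne : S ≠ univ) :
    S.ncard ≤ conNum G :=
  le_csSup bddAbove_ncard_cycConvex ⟨S, hS, hS_ne, rfl⟩

lemma exists_cycConvex_ncard_eq_conNum [Finite V] [Nonempty V] :
    ∃ S : Set V, CycConvex G S ∧ S ≠ univ ∧ S.ncard = conNum G :=
  Nat.sSup_mem (s := {n | ∃ S : Set V, CycConvex G S ∧ S ≠ univ ∧ S.ncard = n})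
    ⟨0, ∅, cycConvex_empty, empty_ne_univ, ncard_empty _⟩ bddAbove_ncard_cycConvex

lemma CycConvex.ncard_le_of_notMem [Finite V] {S : Set V} (hS : CycConvex G S) {u : V}
    (hu : u ∉ S) :
    S.ncard ≤ (G.connectedComponentMk u).suppᶜ.ncard +
      conNum (G.induce (G.connectedComponentMk u).supp) := by
  set K := G.connectedComponentMk u
  have hT : (Subtype.val ⁻¹' S : Set K.supp).ncard ≤ conNum (G.induce K.supp) := by
    refine ncard_le_conNum (hS.comap (Embedding.induce _).toHom Subtype.val_injective) ?_
    exact (ne_univ_iff_exists_notMem _).2 ⟨⟨u, rfl⟩, hu⟩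
  have hT_eq : (Subtype.val ⁻¹' S : Set K.supp).ncard = (K.supp ∩ S).ncard := by
    rw [← ncard_image_of_injective _ Subtype.val_injective, Subtype.image_preimage_coe]
  have hdiff : (S \ K.supp).ncard ≤ K.suppᶜ.ncard := ncard_le_ncard fun x hx => hx.2
  rw [← ncard_inter_add_ncard_sdiff_eq_ncard S K.supp, inter_comm]
  omega

lemma ncard_compl_supp_add_conNum_le [Finite V] (K : G.ConnectedComponent) :
    K.suppᶜ.ncard + conNum (G.induce K.supp) ≤ conNum G := by
  have : Nonempty K.supp := ⟨⟨K.out, K.out_eq⟩⟩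
  obtain ⟨T, hT, hT_ne, hT_card⟩ := exists_cycConvex_ncard_eq_conNum (G := G.induce K.supp)
  obtain ⟨x, hx⟩ := (ne_univ_iff_exists_notMem _).1 hT_ne
  have himage : Subtype.val '' T ⊆ K.supp := by rintro _ ⟨y, -, rfl⟩; exact y.2
  refine le_of_eq_of_le ?_ (ncard_le_conNum (hT.compl_supp_union_image K) ?_)
  · rw [ncard_union_eq (disjoint_compl_left.mono_right himage),
      ncard_image_of_injective _ Subtype.val_injective, hT_card]
  · refine (ne_univ_iff_exists_notMem _).2 ⟨x, ?_⟩
    rintro (hxK | hxT)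
    · exact hxK x.2
    · exact hx (Subtype.val_injective.mem_set_image.1 hxT)

end CycleConvexity

theorem stmt_18_general {V : Type*} [Fintype V] (G : SimpleGraph V) :
    conNum G = sSup {n | ∃ K : G.ConnectedComponent,
      n = (Fintype.card V - K.supp.ncard) + conNum (SimpleGraph.induce K.supp G)} := by
  have hcompl (K : G.ConnectedComponent) : Fintype.card V - K.supp.ncard = K.suppᶜ.ncard := by
    rw [ncard_compl, Nat.card_eq_fintype_card]
  have hbdd : BddAbove {n | ∃ K : G.ConnectedComponent,
      n = (Fintype.card V - K.supp.ncard) + conNum (SimpleGraph.induce K.supp G)} :=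
    (finite_range fun K : G.ConnectedComponent =>
      (Fintype.card V - K.supp.ncard) + conNum (G.induce K.supp)).bddAbove.mono
      (by rintro _ ⟨K, rfl⟩; exact ⟨K, rfl⟩)
  refine le_antisymm (csSup_le' ?_) (csSup_le' ?_)
  · rintro _ ⟨S, hS, hS_ne, rfl⟩
    obtain ⟨u, hu⟩ := (ne_univ_iff_exists_notMem S).1 hS_ne
    exact (hS.ncard_le_of_notMem hu).trans (le_csSup hbdd ⟨_, by rw [hcompl]⟩)
  · rintro _ ⟨K, rfl⟩
    rw [hcompl]
    exact ncard_compl_supp_add_conNum_le K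

theorem stmt_18 {V : Type*} [Fintype V] (G : SimpleGraph V)
    (ht : ∃ K1 K2 : G.ConnectedComponent, K1 ≠ K2) :
    conNum G = sSup {n | ∃ K : G.ConnectedComponent,
      n = (Fintype.card V - K.supp.ncard) + conNum (SimpleGraph.induce K.supp G)} :=
  stmt_18_general G
end
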